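/- arXiv:quant-ph/0610060 — 4 statements merged into one kernel-verified Lean document; each statement's English description precedes it below -/
import Mathlib

section
/- For any quantum POVM M = {M_i} and differentiable family of density matrices ρ(θ), the classical Fisher information of the measurement outcome distribution satisfies J_M(θ) = Σ_i [tr(M_i ρ')]²/tr(M_i ρ) ≤ tr(ρ' L_ρ(ρ')), where L_ρ is the symmetric logarithmic derivative superoperator, i.e., the classical Fisher information of any measurement is bounded by the quantum Fisher information. -/
/-!
Write `M = Sᴴ S`. With respect to the semi-inner product `⟪X, Y⟫ = tr (Y ρ Xᴴ)`, the three
quantities `tr (M ρ L)`, `tr (M ρ)` and `tr (M L ρ L)` are `⟪S L, S⟫`, `‖S‖²` and `‖S L‖²`, so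
Cauchy–Schwarz gives `(re tr (M ρ L))² ≤ tr (M ρ) · tr (M L ρ L)`. For Hermitian `M` the SLD
equation `ρ L + L ρ = 2 ρ'` turns `re tr (M ρ')` into `re tr (M ρ L)`. Summing over the POVM,
`∑ M_i = 1` collapses the right-hand sides to `tr (L ρ L)`, which the SLD equation with `M = L`
identifies with `re tr (ρ' L)`.
-/

open Matrix RCLike
open scoped ComplexOrder ComplexConjugate

namespace Matrix

variable {n 𝕜 : Type*} [Fintype n] [RCLike 𝕜]

lemma re_trace_mul_mul_conjTranspose_sq_le {ρ : Matrix n n 𝕜} (hρ : ρ.PosSemidef)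
    (X Y : Matrix n n 𝕜) :
    re (Y * ρ * Xᴴ).trace ^ 2 ≤ re (X * ρ * Xᴴ).trace * re (Y * ρ * Yᴴ).trace := by
  let := ρ.toMatrixSeminormedAddCommGroup hρ
  let := ρ.toMatrixInnerProductSpace hρ
  have hinner (A B : Matrix n n 𝕜) : (inner 𝕜 A B : 𝕜) = (B * ρ * Aᴴ).trace := rfl
  have hnorm (A : Matrix n n 𝕜) : ‖A‖ ^ 2 = re (A * ρ * Aᴴ).trace := by
    rw [← hinner]; exact norm_sq_eq_re_inner A
  rw [← hinner, ← hnorm, ← hnorm, ← mul_pow, ← sq_abs]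
  exact pow_le_pow_left₀ (abs_nonneg _) ((abs_re_le_norm _).trans (norm_inner_le_norm X Y)) 2

lemma PosSemidef.re_trace_mul_mul_conjTranspose_nonneg {ρ : Matrix n n 𝕜} (hρ : ρ.PosSemidef)
    (X : Matrix n n 𝕜) : 0 ≤ re (X * ρ * Xᴴ).trace :=
  (RCLike.nonneg_iff.mp (hρ.mul_mul_conjTranspose_same X).trace_nonneg).1

open scoped MatrixOrder in
lemma sq_re_trace_mul_mul_div_le {ρ M L : Matrix n n 𝕜} (hρ : ρ.PosSemidef) (hM : M.PosSemidef)
    (hL : L.IsHermitian) :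
    re (M * (ρ * L)).trace ^ 2 / re (M * ρ).trace ≤ re (M * (L * (ρ * L))).trace := by
  classical
  obtain ⟨S, rfl⟩ := CStarAlgebra.nonneg_iff_eq_star_mul_self.mp hM.nonneg
  have hSL : (S * L)ᴴ = L * Sᴴ := by rw [conjTranspose_mul, hL.eq]
  have h₁ : (star S * S * (ρ * L)).trace = (S * ρ * (S * L)ᴴ).trace := by
    rw [mul_assoc, trace_mul_comm, star_eq_conjTranspose, hSL]; noncomm_ring
  have h₂ : (star S * S * ρ).trace = (S * ρ * Sᴴ).trace := by
    rw [mul_assoc, trace_mul_comm, star_eq_conjTranspose, mul_assoc]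
  have h₃ : (star S * S * (L * (ρ * L))).trace = (S * L * ρ * (S * L)ᴴ).trace := by
    rw [mul_assoc, trace_mul_comm, star_eq_conjTranspose, hSL]; noncomm_ring
  rw [h₁, h₂, h₃]
  -- `x / 0 = 0`, so no positivity of `tr (M ρ)` is needed
  exact div_le_of_le_mul₀ (hρ.re_trace_mul_mul_conjTranspose_nonneg S)
    (hρ.re_trace_mul_mul_conjTranspose_nonneg (S * L))
    (re_trace_mul_mul_conjTranspose_sq_le hρ (S * L) S)

lemma re_trace_mul_eq_of_mul_add_mul_eq {ρ ρ' L M : Matrix n n 𝕜} (hρ : ρ.IsHermitian)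
    (hL : L.IsHermitian) (hM : M.IsHermitian) (h : ρ * L + L * ρ = (2 : 𝕜) • ρ') :
    re (M * ρ').trace = re (M * (ρ * L)).trace := by
  have hconj : (M * (L * ρ)).trace = conj (M * (ρ * L)).trace := by
    rw [← star_def, ← trace_conjTranspose, conjTranspose_mul, conjTranspose_mul, hM.eq, hρ.eq,
      hL.eq, trace_mul_comm M]
  have h2 : 2 * (M * ρ').trace = 2 * (re (M * (ρ * L)).trace : 𝕜) := by
    rw [← add_conj, ← hconj, ← trace_add, ← mul_add, h, mul_smul_comm, trace_smul, smul_eq_mul]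
  simpa using congrArg re h2

end Matrix

theorem stmt_4_general {n m : ℕ} (ρ ρ' L : Matrix (Fin n) (Fin n) ℂ)
    (hρ : ρ.PosDef) (hL : L.IsHermitian) (hSLD : ρ * L + L * ρ = (2 : ℂ) • ρ')
    (M : Fin m → Matrix (Fin n) (Fin n) ℂ)
    (hM : ∀ i, (M i).PosSemidef) (hMsum : ∑ i, M i = 1) :
    ∑ i, (((M i * ρ').trace).re) ^ 2 / ((M i * ρ).trace).re ≤ ((ρ' * L).trace).re := by
  simp only [← re_to_complex]
  have hρH := hρ.isHermitian
  calc ∑ i, re (M i * ρ').trace ^ 2 / re (M i * ρ).trace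
      = ∑ i, re (M i * (ρ * L)).trace ^ 2 / re (M i * ρ).trace := by
        simp only [fun i => re_trace_mul_eq_of_mul_add_mul_eq hρH hL (hM i).isHermitian hSLD]
    _ ≤ ∑ i, re (M i * (L * (ρ * L))).trace := Finset.sum_le_sum fun i _ =>
        sq_re_trace_mul_mul_div_le hρ.posSemidef (hM i) hL
    _ = re (L * (ρ * L)).trace := by
        rw [← map_sum, ← trace_sum, ← Finset.sum_mul, hMsum, one_mul]
    _ = re (ρ' * L).trace := by
        rw [trace_mul_comm ρ', re_trace_mul_eq_of_mul_add_mul_eq hρH hL hL hSLD]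

/-- The classical Fisher information of the outcome distribution of any POVM `{M_i}` on a
differentiable family of positive-definite density matrices `ρ(θ)` is bounded by the quantum
Fisher information: `Σ_i [tr(M_i ρ')]²/tr(M_i ρ) ≤ tr(ρ' L_ρ(ρ'))`, where `L = L_ρ(ρ')` is
the symmetric logarithmic derivative, characterized (for positive-definite `ρ`) by
`ρL + Lρ = 2ρ'` and Hermiticity. -/
theorem stmt_4 {n m : ℕ} (ρ ρ' L : Matrix (Fin n) (Fin n) ℂ)
    (hρ : ρ.PosDef) (hρtr : ρ.trace = 1) (hρ' : ρ'.IsHermitian) (hρ'tr : ρ'.trace = 0)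
    (hL : L.IsHermitian) (hSLD : ρ * L + L * ρ = (2 : ℂ) • ρ')
    (M : Fin m → Matrix (Fin n) (Fin n) ℂ)
    (hM : ∀ i, (M i).PosSemidef) (hMsum : ∑ i, M i = 1)
    (hMpos : ∀ i, 0 < ((M i * ρ).trace).re) :
    ∑ i, (((M i * ρ').trace).re) ^ 2 / ((M i * ρ).trace).re ≤ ((ρ' * L).trace).re :=
  stmt_4_general ρ ρ' L hρ hL hSLD M hM hMsum
end

section
/- Minimization for the optimal phase-estimation input: over all real vectors (a_1,…,a_N) with Σ_k a_k² = 1, the minimum of 1 − Σ_{k=2}^{N} a_{k−1} a_k equals 2 sin²(π/(2N+2)). -/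
open Real

/-- Over all real unit vectors `(a_1, …, a_N)` (here `a : ℕ → ℝ` indexed `0, …, N-1` with
`Σ_{k<N} a_k² = 1`), the minimum of `1 − Σ_{k=2}^{N} a_{k−1} a_k`
(i.e. `1 − Σ_{k<N-1} a_k a_{k+1}`) equals `2 sin²(π/(2N+2))`. -/
theorem stmt_8 (N : ℕ) (hN : 1 ≤ N) :
    IsLeast {w : ℝ | ∃ a : ℕ → ℝ, (∑ k ∈ Finset.range N, a k ^ 2 = 1) ∧
        w = 1 - ∑ k ∈ Finset.range (N - 1), a k * a (k + 1)}
      (2 * Real.sin (π / (2 * N + 2)) ^ 2) := by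
  have hN1 : (0:ℝ) < (N:ℝ) + 1 := by positivity
  set θ : ℝ := π / (N + 1) with hθdef
  have hθpos : 0 < θ := div_pos pi_pos hN1
  set g : ℕ → ℝ := fun k => Real.sin (k * θ) with hg
  have hrec : ∀ k : ℕ, g k + g (k + 2) = 2 * Real.cos θ * g (k + 1) := by
    intro k
    simp only [hg]
    push_cast
    rw [show ((k:ℝ)) * θ = ((k:ℝ) + 1) * θ - θ by ring,
      show ((k:ℝ) + 2) * θ = ((k:ℝ) + 1) * θ + θ by ring, Real.sin_sub, Real.sin_add]
    ring
  have hg0 : g 0 = 0 := by simp [hg]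
  have hgN1 : g (N + 1) = 0 := by
    have h : ((N:ℝ) + 1) * θ = π := by
      rw [hθdef]; field_simp
    simp only [hg]
    push_cast
    rw [h, Real.sin_pi]
  have hgpos : ∀ k : ℕ, k < N → 0 < g (k + 1) := by
    intro k hk
    apply Real.sin_pos_of_pos_of_lt_pi
    · push_cast; positivity
    · push_cast
      have h1 : ((k:ℝ) + 1) < (N:ℝ) + 1 := by exact_mod_cast by omega
      calc ((k:ℝ) + 1) * θ < ((N:ℝ) + 1) * θ := mul_lt_mul_of_pos_right h1 hθpos
        _ = π := by rw [hθdef]; field_simp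
  have hpN : 0 < g N := by
    have := hgpos (N - 1) (by omega)
    rwa [show N - 1 + 1 = N by omega] at this
  have hgNrec : g (N - 1) = 2 * Real.cos θ * g N := by
    have h := hrec (N - 1)
    rw [show N - 1 + 1 = N by omega, show N - 1 + 2 = N + 1 by omega, hgN1] at h
    linarith
  -- key upper bound on the cross sum
  have key : ∀ a : ℕ → ℝ, (∑ k ∈ Finset.range N, a k ^ 2) = 1 →
      ∑ k ∈ Finset.range (N - 1), a k * a (k + 1) ≤ Real.cos θ := by
    intro a ha
    set u : ℕ → ℝ := fun k => g k / (2 * g (k + 1)) with hu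
    have hterm : ∀ k ∈ Finset.range (N - 1),
        a k * a (k + 1) ≤ Real.cos θ * a k ^ 2 + (u (k+1) * a (k+1) ^ 2 - u k * a k ^ 2) := by
      intro k hk
      rw [Finset.mem_range] at hk
      have hp1 : 0 < g (k + 1) := hgpos k (by omega)
      have hp2 : 0 < g (k + 2) := hgpos (k + 1) (by omega)
      have hc : Real.cos θ = (g k + g (k + 2)) / (2 * g (k + 1)) := by
        rw [eq_div_iff (by positivity)]
        linarith [hrec k]
      rw [← sub_nonneg]
      have e : Real.cos θ * a k ^ 2 + (u (k+1) * a (k+1) ^ 2 - u k * a k ^ 2) - a k * a (k + 1)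
          = (g (k + 2) * a k - g (k + 1) * a (k + 1)) ^ 2 / (2 * g (k + 1) * g (k + 2)) := by
        simp only [hu]
        rw [hc]
        field_simp
        ring
      rw [e]
      positivity
    have hsum := Finset.sum_le_sum hterm
    rw [Finset.sum_add_distrib, Finset.sum_range_sub (fun k => u k * a k ^ 2)] at hsum
    have hu0 : u 0 * a 0 ^ 2 = 0 := by simp [hu, hg0]
    have huN : u (N - 1) = Real.cos θ := by
      simp only [hu]
      rw [show N - 1 + 1 = N by omega, hgNrec]
      field_simp
    rw [hu0, huN, sub_zero] at hsum
    calc ∑ k ∈ Finset.range (N - 1), a k * a (k + 1)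
        ≤ ∑ k ∈ Finset.range (N - 1), Real.cos θ * a k ^ 2 + Real.cos θ * a (N-1) ^ 2 := hsum
      _ = Real.cos θ * (∑ k ∈ Finset.range (N - 1), a k ^ 2 + a (N-1) ^ 2) := by
          rw [mul_add, Finset.mul_sum]
      _ = Real.cos θ * ∑ k ∈ Finset.range N, a k ^ 2 := by
          rw [show N = N - 1 + 1 by omega, Finset.sum_range_succ,
            show N - 1 + 1 - 1 = N - 1 by omega]
      _ = Real.cos θ := by rw [ha, mul_one]
  -- value identity
  have hval : 2 * Real.sin (π / (2 * N + 2)) ^ 2 = 1 - Real.cos θ := by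
    have hy : θ = 2 * (π / (2 * N + 2)) := by
      rw [hθdef, show (2 * (N:ℝ) + 2) = 2 * ((N:ℝ) + 1) by ring]
      field_simp
    rw [hy, Real.cos_two_mul']
    have := Real.sin_sq_add_cos_sq (π / (2 * N + 2))
    linarith
  constructor
  · -- membership
    set S : ℝ := ∑ k ∈ Finset.range N, g (k + 1) ^ 2 with hS
    have hSpos : 0 < S := by
      apply Finset.sum_pos'
      · intro i _; positivity
      · exact ⟨0, Finset.mem_range.mpr (by omega), pow_pos (hgpos 0 (by omega)) 2⟩
    have hs2 : (Real.sqrt S)⁻¹ ^ 2 = S⁻¹ := by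
      rw [← Real.sqrt_inv, Real.sq_sqrt (inv_nonneg.mpr hSpos.le)]
    have hid : ∑ k ∈ Finset.range (N - 1), g (k + 1) * g (k + 2) = Real.cos θ * S := by
      have hterm : ∀ k ∈ Finset.range (N - 1),
          g (k + 1) * g (k + 2)
            = Real.cos θ * g (k + 1) ^ 2
              + (g (k+1) * g (k+2) / 2 - g k * g (k+1) / 2) := by
        intro k _
        linear_combination (g (k + 1) / 2) * hrec k
      rw [Finset.sum_congr rfl hterm, Finset.sum_add_distrib,
        Finset.sum_range_sub (fun k => g k * g (k + 1) / 2),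
        show N - 1 + 1 = N by omega, hg0, hgNrec, ← Finset.mul_sum, hS,
        show N = N - 1 + 1 by omega, Finset.sum_range_succ,
        show N - 1 + 1 - 1 = N - 1 by omega, show N - 1 + 1 = N by omega]
      ring
    have hnorm : ∑ k ∈ Finset.range N, ((Real.sqrt S)⁻¹ * g (k + 1)) ^ 2 = 1 := by
      have e : ∑ k ∈ Finset.range N, ((Real.sqrt S)⁻¹ * g (k + 1)) ^ 2
          = ((Real.sqrt S)⁻¹) ^ 2 * S := by
        rw [hS, Finset.mul_sum]
        exact Finset.sum_congr rfl fun k _ => by ring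
      rw [e, hs2, inv_mul_cancel₀ hSpos.ne']
    have hcross : ∑ k ∈ Finset.range (N - 1),
        ((Real.sqrt S)⁻¹ * g (k + 1)) * ((Real.sqrt S)⁻¹ * g (k + 1 + 1)) = Real.cos θ := by
      have e : ∑ k ∈ Finset.range (N - 1),
          ((Real.sqrt S)⁻¹ * g (k + 1)) * ((Real.sqrt S)⁻¹ * g (k + 1 + 1))
          = ((Real.sqrt S)⁻¹) ^ 2 * ∑ k ∈ Finset.range (N - 1), g (k + 1) * g (k + 2) := by
        rw [Finset.mul_sum]
        exact Finset.sum_congr rfl fun k _ => by ring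
      rw [e, hs2, hid, mul_comm (Real.cos θ) S, ← mul_assoc, inv_mul_cancel₀ hSpos.ne', one_mul]
    exact ⟨fun k => (Real.sqrt S)⁻¹ * g (k + 1), hnorm, by rw [hcross, hval]⟩
  · rintro w ⟨a, ha1, rfl⟩
    have := key a ha1
    rw [hval]
    linarith
end

section
/- If the input state to N parallel applications of U(θ) = diag(1, e^{2πiθ}) is Σ_{k=1}^N a_k |k̂⟩ with real coefficients a_k, a_0 = 0, followed by the inverse Fourier transform on the symmetric weight basis and the estimator l/(N+1), then the expected deviation W = E[1 − cos(2π(θ̂ − θ))] equals 1 − Σ_{k=2}^N a_{k−1} a_k, independent of θ. -/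
/-!
Write `φ_l = 2π(θ - l/(N+1))`, `z_l = e^{iφ_l}` and `T(z) = Σ_k a_k z^k`. Since
`1 - cos φ = ‖1 - e^{iφ}‖² / 2`, the `l`-th summand is `‖(1 - z_l) T(z_l)‖² / (2(N+1))`.
Extending `a` by `a_{N+1} = 0`, summation by parts (using `a_0 = 0`) gives
`(1 - z) T(z) = z Σ_{k ≤ N} (a_{k+1} - a_k) z^k`. The `z_l` are the `(N+1)`-st roots of unity
rotated by `e^{2πiθ}`, so Parseval's identity for the discrete Fourier transform turns the sum
over `l` into `Σ_k (a_{k+1} - a_k)² / 2 = Σ_k a_k² - Σ_k a_k a_{k+1} = 1 - Σ_k a_k a_{k+1}`.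
-/

open Real Complex Finset ComplexConjugate

namespace IsPrimitiveRoot

variable {ω : ℂ} {n : ℕ}

lemma sum_pow_mul_conj_pow (hω : IsPrimitiveRoot ω n) {j k : ℕ} (hj : j < n) (hk : k < n) :
    ∑ l ∈ range n, (ω ^ l) ^ j * conj ((ω ^ l) ^ k) = if j = k then (n : ℂ) else 0 := by
  have hω₀ : ω ≠ 0 := hω.ne_zero (by omega)
  have hω₁ : conj ω = ω⁻¹ := (inv_eq_conj (hω.norm'_eq_one (by omega))).symm
  set ζ := ω ^ j * ω⁻¹ ^ k
  have hterm : ∀ l, (ω ^ l) ^ j * conj ((ω ^ l) ^ k) = ζ ^ l := fun l => by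
    simp only [map_pow, hω₁, ζ, mul_pow, ← pow_mul, mul_comm l]
  simp only [hterm]
  split_ifs with hjk
  · have : ζ = 1 := by simp [ζ, hjk, hω₀]
    simp [this]
  · have hζ : ζ ≠ 1 := by
      intro h
      refine hjk (hω.pow_inj hj hk ?_)
      simpa [ζ, ← div_eq_mul_inv, div_eq_one_iff_eq (pow_ne_zero k hω₀)] using h
    have hζn : ζ ^ n = 1 := by
      simp only [ζ, mul_pow, ← pow_mul, inv_pow]
      rw [mul_comm j, mul_comm k, pow_mul, pow_mul, hω.pow_eq_one]
      simp
    rw [geom_sum_eq hζ, hζn, sub_self, zero_div]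

lemma sum_norm_sq_sum_mul_pow (hω : IsPrimitiveRoot ω n) (b : ℕ → ℂ) :
    ∑ l ∈ range n, ‖∑ k ∈ range n, b k * (ω ^ l) ^ k‖ ^ 2 = n * ∑ k ∈ range n, ‖b k‖ ^ 2 := by
  apply Complex.ofReal_injective
  push_cast
  calc ∑ l ∈ range n, (‖∑ k ∈ range n, b k * (ω ^ l) ^ k‖ : ℂ) ^ 2
      = ∑ l ∈ range n, ∑ j ∈ range n, ∑ k ∈ range n,
          b j * conj (b k) * ((ω ^ l) ^ j * conj ((ω ^ l) ^ k)) := by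
        refine sum_congr rfl fun l _ => ?_
        rw [← mul_conj', map_sum, sum_mul_sum]
        simp only [map_mul]
        refine sum_congr rfl fun j _ => sum_congr rfl fun k _ => by ring
    _ = ∑ j ∈ range n, ∑ k ∈ range n, b j * conj (b k) * (if j = k then (n : ℂ) else 0) := by
        rw [sum_comm]
        refine sum_congr rfl fun j hj => ?_
        rw [sum_comm]
        refine sum_congr rfl fun k hk => ?_
        rw [← mul_sum, hω.sum_pow_mul_conj_pow (mem_range.1 hj) (mem_range.1 hk)]
    _ = n * ∑ k ∈ range n, (‖b k‖ : ℂ) ^ 2 := by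
        simp only [mul_ite, mul_zero, sum_ite_eq, mul_sum, mul_conj']
        refine sum_congr rfl fun k hk => ?_
        simp [hk, mul_comm]

end IsPrimitiveRoot

lemma sum_norm_sq_sum_mul_exp_pow {n : ℕ} (hn : n ≠ 0) (θ : ℝ) (b : ℕ → ℂ) :
    ∑ l ∈ range n, ‖∑ k ∈ range n, b k * exp ((2 * π * (θ - l / n) : ℝ) * I) ^ k‖ ^ 2 =
      n * ∑ k ∈ range n, ‖b k‖ ^ 2 := by
  set c := exp ((2 * π * θ : ℝ) * I)
  have hpoint : ∀ l : ℕ,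
      exp ((2 * π * (θ - l / n) : ℝ) * I) = c * (exp (2 * π * I / n))⁻¹ ^ l := fun l => by
    rw [← Complex.exp_neg, ← Complex.exp_nat_mul, ← Complex.exp_add]
    congr 1
    push_cast
    field_simp
    ring
  have hc : ∀ k, ‖c ^ k‖ = 1 := fun k => by rw [norm_pow, norm_exp_ofReal_mul_I, one_pow]
  simp only [hpoint, mul_pow, ← mul_assoc]
  rw [(isPrimitiveRoot_exp n hn).inv.sum_norm_sq_sum_mul_pow]
  simp only [norm_mul, hc, mul_one]

lemma Finset.sum_range_succ_eq_sum_range {M : Type*} [AddCommGroup M] (f : ℕ → M) {n : ℕ}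
    (h : f 0 = f n) : ∑ k ∈ range n, f (k + 1) = ∑ k ∈ range n, f k := by
  have := (sum_range_succ' f n).symm.trans (sum_range_succ f n)
  rwa [h, add_right_cancel_iff] at this

section SummationByParts

variable {R : Type*} [CommRing R] {b : ℕ → R} {n : ℕ}

lemma one_sub_mul_sum_mul_pow (hb0 : b 0 = 0) (hbn : b n = 0) (z : R) :
    (1 - z) * ∑ k ∈ range n, b k * z ^ k = z * ∑ k ∈ range n, (b (k + 1) - b k) * z ^ k := by
  have hshift : ∑ k ∈ range n, b (k + 1) * z ^ (k + 1) = ∑ k ∈ range n, b k * z ^ k :=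
    sum_range_succ_eq_sum_range (fun k => b k * z ^ k) (by simp [hb0, hbn])
  calc (1 - z) * ∑ k ∈ range n, b k * z ^ k
      = ∑ k ∈ range n, b (k + 1) * z ^ (k + 1) - z * ∑ k ∈ range n, b k * z ^ k := by
        rw [hshift]; ring
    _ = z * ∑ k ∈ range n, (b (k + 1) - b k) * z ^ k := by
        rw [mul_sum, mul_sum, ← sum_sub_distrib]
        exact sum_congr rfl fun k _ => by ring

lemma sum_range_sub_sq (hb0 : b 0 = 0) (hbn : b n = 0) :
    ∑ k ∈ range n, (b (k + 1) - b k) ^ 2 =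
      2 * (∑ k ∈ range n, b k ^ 2 - ∑ k ∈ range n, b k * b (k + 1)) := by
  have hshift : ∑ k ∈ range n, b (k + 1) ^ 2 = ∑ k ∈ range n, b k ^ 2 :=
    sum_range_succ_eq_sum_range (fun k => b k ^ 2) (by simp [hb0, hbn])
  have hexpand : ∀ k, (b (k + 1) - b k) ^ 2 = b (k + 1) ^ 2 + b k ^ 2 - 2 * (b k * b (k + 1)) :=
    fun k => by ring
  simp only [hexpand, sum_sub_distrib, sum_add_distrib, ← mul_sum, hshift]
  ring

end SummationByParts

lemma Complex.norm_one_sub_exp_mul_I_sq (x : ℝ) :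
    ‖1 - exp (x * I)‖ ^ 2 = 2 * (1 - Real.cos x) := by
  rw [← Complex.normSq_eq_norm_sq, normSq_apply]
  simp only [sub_re, one_re, exp_ofReal_mul_I_re, sub_im, one_im, exp_ofReal_mul_I_im]
  linear_combination Real.sin_sq_add_cos_sq x

lemma norm_sum_sub_mul_exp_pow_sq {b : ℕ → ℂ} {n : ℕ} (hb0 : b 0 = 0) (hbn : b n = 0) (x : ℝ) :
    ‖∑ k ∈ range n, (b (k + 1) - b k) * exp (x * I) ^ k‖ ^ 2 =
      2 * (1 - Real.cos x) * ‖∑ k ∈ range n, b k * exp (x * I) ^ k‖ ^ 2 := by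
  rw [← norm_one_sub_exp_mul_I_sq, ← mul_pow, ← norm_mul, one_sub_mul_sum_mul_pow hb0 hbn,
    norm_mul, norm_exp_ofReal_mul_I, one_mul]

lemma sum_Icc_two_pred_mul_eq_sum_range {R : Type*} [NonUnitalNonAssocSemiring R] {a : ℕ → R}
    (ha0 : a 0 = 0) (N : ℕ) :
    ∑ k ∈ Icc 2 N, a (k - 1) * a k = ∑ k ∈ range N, a k * a (k + 1) := by
  have hsubset : ∑ k ∈ Icc 2 N, a (k - 1) * a k = ∑ k ∈ range (N + 1), a (k - 1) * a k := by
    refine sum_subset (fun k hk => ?_) fun k hkN hk => ?_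
    · simp only [mem_Icc, mem_range] at hk ⊢
      omega
    · simp only [mem_Icc, mem_range] at hk hkN
      rw [show k - 1 = 0 by omega, ha0, zero_mul]
  rw [hsubset, sum_range_succ', zero_tsub, ha0, mul_zero, add_zero]
  simp only [Nat.add_sub_cancel]

theorem stmt_9_general (N : ℕ) (θ : ℝ) (a : ℕ → ℝ)
    (ha0 : a 0 = 0) (hnorm : ∑ k ∈ Finset.range (N + 1), a k ^ 2 = 1)
    (Pr : ℕ → ℝ)
    (hPr : ∀ l, Pr l =
      ‖∑ k ∈ Finset.range (N + 1),
        (a k : ℂ) * Complex.exp (2 * π * k * ((θ : ℝ) - l / (N + 1)) * Complex.I)‖ ^ 2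
        / (N + 1)) :
    ∑ l ∈ Finset.range (N + 1), Pr l * (1 - Real.cos (2 * π * (θ - l / (N + 1)))) =
      1 - ∑ k ∈ Finset.Icc 2 N, a (k - 1) * a k := by
  set b : ℕ → ℝ := fun k => if k ≤ N then a k else 0 with hb
  have hba : ∀ k ∈ range (N + 1), b k = a k := fun k hk =>
    if_pos (Nat.lt_succ_iff.1 (mem_range.1 hk))
  have hb0 : b 0 = 0 := by simp [hb, ha0]
  have hbN : b (N + 1) = 0 := by simp [hb]
  have hterm : ∀ l : ℕ, Pr l * (1 - Real.cos (2 * π * (θ - l / (N + 1)))) =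
      ‖∑ k ∈ range (N + 1), ((b (k + 1) : ℂ) - b k) *
        exp ((2 * π * (θ - l / (N + 1)) : ℝ) * I) ^ k‖ ^ 2 / (2 * (N + 1)) := fun l => by
    rw [norm_sum_sub_mul_exp_pow_sq (b := fun k => (b k : ℂ)) (by simp [hb0]) (by simp [hbN]),
      hPr l]
    have hamp : ∑ k ∈ range (N + 1), (a k : ℂ) * exp (2 * π * k * ((θ : ℝ) - l / (N + 1)) * I) =
        ∑ k ∈ range (N + 1), (b k : ℂ) * exp ((2 * π * (θ - l / (N + 1)) : ℝ) * I) ^ k :=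
      sum_congr rfl fun k hk => by
        rw [hba k hk, ← Complex.exp_nat_mul]
        push_cast
        ring_nf
    rw [hamp]
    field_simp
  have hparseval := sum_norm_sq_sum_mul_exp_pow (n := N + 1) (by omega) θ
    fun k => (b (k + 1) : ℂ) - b k
  simp only [Nat.cast_add, Nat.cast_one] at hparseval
  have hsq : ∑ k ∈ range (N + 1), b k ^ 2 = 1 :=
    (sum_congr rfl fun k hk => by rw [hba k hk]).trans hnorm
  have hneighbours : ∑ k ∈ range (N + 1), b k * b (k + 1) = ∑ k ∈ range N, a k * a (k + 1) := by
    rw [sum_range_succ, hbN, mul_zero, add_zero]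
    exact sum_congr rfl fun k hk => by
      rw [hba k (by simp at hk ⊢; omega), hba (k + 1) (by simp at hk ⊢; omega)]
  rw [sum_congr rfl fun l _ => hterm l, ← sum_div, hparseval]
  simp only [← ofReal_sub, norm_real, Real.norm_eq_abs, sq_abs]
  rw [sum_range_sub_sq hb0 hbN, hsq, hneighbours, sum_Icc_two_pred_mul_eq_sum_range ha0]
  field_simp

/-- For the parallel phase-estimation strategy with entangled input `Σ_k a_k |k̂⟩`
(real coefficients, `a_0 = 0`, normalized), inverse Fourier transform and estimator
`θ̂ = l/(N+1)`, the outcome probabilities are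
`Pr(l) = |Σ_k a_k e^{2πik(θ − l/(N+1))}|²/(N+1)` and the expected deviation
`W = E[1 − cos(2π(θ̂ − θ))] = Σ_l Pr(l)(1 − cos(2π(θ − l/(N+1))))` equals
`1 − Σ_{k=2}^N a_{k−1} a_k`, independently of `θ`. -/
theorem stmt_9 (N : ℕ) (hN : 1 ≤ N) (θ : ℝ) (a : ℕ → ℝ)
    (ha0 : a 0 = 0) (hnorm : ∑ k ∈ Finset.range (N + 1), a k ^ 2 = 1)
    (Pr : ℕ → ℝ)
    (hPr : ∀ l, Pr l =
      ‖∑ k ∈ Finset.range (N + 1),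
        (a k : ℂ) * Complex.exp (2 * π * k * ((θ : ℝ) - l / (N + 1)) * Complex.I)‖ ^ 2
        / (N + 1)) :
    ∑ l ∈ Finset.range (N + 1), Pr l * (1 - Real.cos (2 * π * (θ - l / (N + 1)))) =
      1 - ∑ k ∈ Finset.Icc 2 N, a (k - 1) * a k :=
  stmt_9_general N θ a ha0 hnorm Pr hPr
end

section
/- Amplified-parameter probability for projector-class channels: with input state |Ψ_n⟩ = Σ_{i ∈ E_n} (−1)^{w(i)/2} |i⟩ / √(2^{n−1}) (E_n the set of even-parity n-bit strings), applying U^{⊗n} for U = |0⟩⟨θ_0| + |1⟩⟨θ_1| (with |θ_0⟩ = cosθ|0⟩ + sinθ|1⟩, |θ_1⟩ = sinθ|0⟩ − cosθ|1⟩) and measuring in the computational basis, the probability that the outcome string has even parity equals cos²(nθ); specifically, ⟨j|U^{⊗n}|Ψ_n⟩ = (−1)^{w(j)/2} cos(nθ)/√(2^{n−1}) for every even-parity string j. -/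
open Real Matrix

private lemma ipow_re (m : ℕ) :
    (Complex.I ^ m).re = if Even m then (-1 : ℝ) ^ (m / 2) else 0 := by
  rcases Nat.even_or_odd m with ⟨t, ht⟩ | ⟨t, ht⟩
  · subst ht
    have h : Complex.I ^ (t + t) = (((-1 : ℝ) ^ t : ℝ) : ℂ) := by
      rw [← two_mul, pow_mul, Complex.I_sq]; push_cast; ring
    rw [h, Complex.ofReal_re, if_pos ⟨t, rfl⟩,
      show t + t = 2 * t by ring, Nat.mul_div_cancel_left _ (by norm_num)]
  · subst ht
    have h : Complex.I ^ (2 * t + 1) = (((-1 : ℝ) ^ t : ℝ) : ℂ) * Complex.I := by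
      rw [pow_succ, pow_mul, Complex.I_sq]; push_cast; ring
    rw [h, Complex.re_ofReal_mul, Complex.I_re, mul_zero,
      if_neg (by simp [parity_simps])]

/-- Amplified-parameter probability for the projector-class channels: with the even-parity
entangled input `|Ψ_n⟩ = Σ_{i ∈ E_n} (−1)^{w(i)/2}|i⟩/√(2^{n−1})`, applying
`U^{⊗n}` for `U = [[cosθ, sinθ],[sinθ, −cosθ]]` and measuring in the computational basis,
the amplitude on every even-parity string `j` is
`⟨j|U^{⊗n}|Ψ_n⟩ = (−1)^{w(j)/2} cos(nθ)/√(2^{n−1})`, so the probability of an even-parity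
outcome equals `cos²(nθ)`. -/
theorem stmt_18 (n : ℕ) (hn : 1 ≤ n) (θ : ℝ) (hθ : θ ∈ Set.Icc (0 : ℝ) (π / 2))
    (U : Matrix (Fin 2) (Fin 2) ℝ)
    (hU : U = !![Real.cos θ, Real.sin θ; Real.sin θ, -Real.cos θ])
    (w : (Fin n → Fin 2) → ℕ)
    (hw : ∀ s, w s = (Finset.univ.filter fun i => s i = 1).card)
    (ψ : (Fin n → Fin 2) → ℝ)
    (hψ : ∀ s, ψ s = if Even (w s) then (-1 : ℝ) ^ (w s / 2) / Real.sqrt (2 ^ (n - 1)) else 0) :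
    (∀ j : Fin n → Fin 2, Even (w j) →
      ∑ k : Fin n → Fin 2, (∏ i, U (j i) (k i)) * ψ k =
        (-1 : ℝ) ^ (w j / 2) * Real.cos (n * θ) / Real.sqrt (2 ^ (n - 1))) ∧
    ∑ j ∈ Finset.univ.filter (fun j : Fin n → Fin 2 => Even (w j)),
        (∑ k : Fin n → Fin 2, (∏ i, U (j i) (k i)) * ψ k) ^ 2 = Real.cos (n * θ) ^ 2 := by
  -- weight as a sum of values
  have hval : ∀ b : Fin 2, (b : ℕ) = if b = 1 then 1 else 0 := by decide
  have hwsum : ∀ s : Fin n → Fin 2, w s = ∑ i, ((s i : ℕ)) := by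
    intro s
    rw [hw, Finset.card_filter]
    exact Finset.sum_congr rfl fun i _ => (hval (s i)).symm
  -- the key complex identity
  have key : ∀ j : Fin n → Fin 2,
      ∑ k : Fin n → Fin 2, ((∏ i, U (j i) (k i) : ℝ) : ℂ) * Complex.I ^ (w k)
        = (-Complex.I) ^ (w j) * Complex.exp ((n * θ : ℝ) * Complex.I) := by
    intro j
    have factor : ∀ b : Fin 2, ∑ c : Fin 2, ((U b c : ℝ) : ℂ) * Complex.I ^ (c : ℕ)
        = (-Complex.I) ^ (b : ℕ) * Complex.exp ((θ : ℂ) * Complex.I) := by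
      intro b
      rw [Complex.exp_mul_I, ← Complex.ofReal_cos, ← Complex.ofReal_sin]
      fin_cases b <;>
        simp [hU, Fin.sum_univ_two, Matrix.cons_val_zero, Matrix.cons_val_one,
          Matrix.head_cons] <;> push_cast <;> ring_nf <;>
        simp [Complex.I_sq] <;> ring
    calc ∑ k : Fin n → Fin 2, ((∏ i, U (j i) (k i) : ℝ) : ℂ) * Complex.I ^ (w k)
        = ∑ k : Fin n → Fin 2, ∏ i, (((U (j i) (k i) : ℝ) : ℂ) * Complex.I ^ ((k i : ℕ))) := by
          refine Finset.sum_congr rfl fun k _ => ?_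
          rw [Finset.prod_mul_distrib, Finset.prod_pow_eq_pow_sum, ← hwsum]
          push_cast; ring
      _ = ∏ i : Fin n, ∑ c : Fin 2, ((U (j i) c : ℝ) : ℂ) * Complex.I ^ (c : ℕ) := by
          rw [Finset.prod_univ_sum]
          simp
      _ = ∏ i : Fin n, ((-Complex.I) ^ ((j i : ℕ)) * Complex.exp ((θ : ℂ) * Complex.I)) := by
          exact Finset.prod_congr rfl fun i _ => factor (j i)
      _ = (-Complex.I) ^ (w j) * Complex.exp ((n * θ : ℝ) * Complex.I) := by
          rw [Finset.prod_mul_distrib, Finset.prod_pow_eq_pow_sum, ← hwsum,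
            Finset.prod_const, Finset.card_univ, Fintype.card_fin,
            ← Complex.exp_nat_mul]
          push_cast; ring_nf
  -- amplitude formula for every j (even parity case)
  have hsqrt : Real.sqrt (2 ^ (n - 1)) ≠ 0 := by positivity
  have amp : ∀ j : Fin n → Fin 2, Even (w j) →
      ∑ k : Fin n → Fin 2, (∏ i, U (j i) (k i)) * ψ k =
        (-1 : ℝ) ^ (w j / 2) * Real.cos (n * θ) / Real.sqrt (2 ^ (n - 1)) := by
    intro j hj
    have hre : ∀ k : Fin n → Fin 2,
        (∏ i, U (j i) (k i)) * ψ k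
          = ((((∏ i, U (j i) (k i) : ℝ) : ℂ) * Complex.I ^ (w k)).re) / Real.sqrt (2 ^ (n - 1)) := by
      intro k
      rw [Complex.re_ofReal_mul, ipow_re, hψ]
      by_cases h : Even (w k) <;> simp [h] <;> ring
    calc ∑ k : Fin n → Fin 2, (∏ i, U (j i) (k i)) * ψ k
        = (∑ k : Fin n → Fin 2,
            (((∏ i, U (j i) (k i) : ℝ) : ℂ) * Complex.I ^ (w k)).re) / Real.sqrt (2 ^ (n - 1)) := by
          rw [Finset.sum_div]
          exact Finset.sum_congr rfl fun k _ => hre k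
      _ = (((-Complex.I) ^ (w j) * Complex.exp ((n * θ : ℝ) * Complex.I)).re)
            / Real.sqrt (2 ^ (n - 1)) := by rw [← Complex.re_sum, key j]
      _ = (-1 : ℝ) ^ (w j / 2) * Real.cos (n * θ) / Real.sqrt (2 ^ (n - 1)) := by
          obtain ⟨t, ht⟩ := hj
          have h1 : (-Complex.I) ^ (w j) = (((-1 : ℝ) ^ t : ℝ) : ℂ) := by
            rw [ht, ← two_mul, pow_mul]
            have : (-Complex.I) ^ 2 = -1 := by
              rw [neg_pow, Complex.I_sq]; norm_num
            rw [this]; push_cast; ring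
          have h2 : w j / 2 = t := by omega
          rw [h1, h2, Complex.re_ofReal_mul, Complex.exp_ofReal_mul_I_re]
  refine ⟨amp, ?_⟩
  -- counting even-parity strings
  have hcard : ((Finset.univ.filter fun j : Fin n → Fin 2 => Even (w j)).card : ℤ) = 2 ^ (n - 1) := by
    have hz : ∑ k : Fin n → Fin 2, (-1 : ℤ) ^ (w k) = 0 := by
      have : ∀ k : Fin n → Fin 2, (-1 : ℤ) ^ (w k) = ∏ i, (-1 : ℤ) ^ ((k i : ℕ)) := by
        intro k; rw [Finset.prod_pow_eq_pow_sum, ← hwsum]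
      calc ∑ k : Fin n → Fin 2, (-1 : ℤ) ^ (w k)
          = ∑ k : Fin n → Fin 2, ∏ i, (-1 : ℤ) ^ ((k i : ℕ)) :=
            Finset.sum_congr rfl fun k _ => this k
        _ = ∏ i : Fin n, ∑ c : Fin 2, (-1 : ℤ) ^ ((c : ℕ)) := by
            rw [Finset.prod_univ_sum]; simp
        _ = 0 := by
            rw [Finset.prod_const]
            have : ∑ c : Fin 2, (-1 : ℤ) ^ ((c : ℕ)) = 0 := by decide
            rw [this, Finset.card_univ, Fintype.card_fin,
              zero_pow (by omega : n ≠ 0)]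
    have hsplit := Finset.sum_filter_add_sum_filter_not Finset.univ
      (fun k : Fin n → Fin 2 => Even (w k)) (fun k => (-1 : ℤ) ^ (w k))
    rw [hz] at hsplit
    have he : ∑ k ∈ Finset.univ.filter (fun k : Fin n → Fin 2 => Even (w k)),
        (-1 : ℤ) ^ (w k) = (Finset.univ.filter fun k : Fin n → Fin 2 => Even (w k)).card := by
      rw [Finset.sum_congr rfl (fun k hk => ?_), Finset.sum_const, nsmul_eq_mul, mul_one]
      exact (Finset.mem_filter.mp hk).2.neg_one_pow
    have ho : ∑ k ∈ Finset.univ.filter (fun k : Fin n → Fin 2 => ¬ Even (w k)),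
        (-1 : ℤ) ^ (w k) = -(Finset.univ.filter fun k : Fin n → Fin 2 => ¬ Even (w k)).card := by
      rw [Finset.sum_congr rfl (fun k hk => ?_), Finset.sum_const, nsmul_eq_mul, mul_neg_one]
      exact (Nat.not_even_iff_odd.mp (Finset.mem_filter.mp hk).2).neg_one_pow
    have htot := Finset.card_filter_add_card_filter_not
      (s := (Finset.univ : Finset (Fin n → Fin 2)))
      (p := fun k => Even (w k))
    rw [Finset.card_univ, Fintype.card_fun, Fintype.card_fin, Fintype.card_fin] at htot
    have h2n : (2 : ℤ) ^ n = 2 * 2 ^ (n - 1) := by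
      rw [← pow_succ']
      congr 1; omega
    rw [he, ho] at hsplit
    have : ((Finset.univ.filter fun k : Fin n → Fin 2 => Even (w k)).card : ℤ)
        + ((Finset.univ.filter fun k : Fin n → Fin 2 => ¬ Even (w k)).card : ℤ) = 2 ^ n := by
      exact_mod_cast congrArg (fun x : ℕ => (x : ℤ)) htot
    omega
  -- conclude
  have hS : Real.sqrt (2 ^ (n - 1)) ^ 2 = 2 ^ (n - 1) := Real.sq_sqrt (by positivity)
  calc ∑ j ∈ Finset.univ.filter (fun j : Fin n → Fin 2 => Even (w j)),
        (∑ k : Fin n → Fin 2, (∏ i, U (j i) (k i)) * ψ k) ^ 2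
      = ∑ j ∈ Finset.univ.filter (fun j : Fin n → Fin 2 => Even (w j)),
          Real.cos (n * θ) ^ 2 / 2 ^ (n - 1) := by
        refine Finset.sum_congr rfl fun j hj => ?_
        rw [amp j (Finset.mem_filter.mp hj).2, div_pow, mul_pow, hS,
          ← pow_mul, mul_comm (w j / 2) 2]
        rw [pow_mul]
        norm_num
    _ = Real.cos (n * θ) ^ 2 := by
        rw [Finset.sum_const, nsmul_eq_mul]
        have : ((Finset.univ.filter fun j : Fin n → Fin 2 => Even (w j)).card : ℝ)
            = 2 ^ (n - 1) := by exact_mod_cast hcard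
        rw [this]
        field_simp
end
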